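/- Let (Xᵢ)_{i∈I} be a nonempty family of saturated finiteness spaces. Then ⋂_{i∈I} Xᵢ := (⋂_{i∈I} |Xᵢ|, ⋂_{i∈I} (F(Xᵢ) ∩ 𝒫(⋂_{i∈I}|Xᵢ|))) is a saturated finiteness space, and it is the greatest lower bound of the family for the order X ⊆ Y defined by |X| ⊆ |Y| and F(X) ⊆ F(Y). -/

import Mathlib

/-! The closure conditions defining a Δ-finiteness space and clauses (i) and (iii) of saturation
are each preserved by intersecting the families `F i`, once one knows that every member of
every `F i` lies in the web `W i`; the biorthogonal closure passes to the intersection because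
`orth (orth ·)` is monotone. -/

inductive RT : Type
  | var : ℕ → RT
  | lam : ℕ → RT → RT
  | app : RT → List RT → RT

noncomputable instance : DecidableEq RT := Classical.decEq _

namespace Resource

mutual
def size : RT → ℕ
  | .var _ => 1
  | .lam _ s => 1 + size s
  | .app s S => 1 + size s + sizeP S
def sizeP : List RT → ℕ
  | [] => 0
  | t :: T => size t + sizeP T
end

mutual
def fv : RT → Finset ℕ
  | .var x => {x}
  | .lam x s => (fv s).erase x
  | .app s S => fv s ∪ fvP S
def fvP : List RT → Finset ℕ
  | [] => ∅
  | t :: T => fv t ∪ fvP T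
end

mutual
def fc : RT → ℕ → ℕ
  | .var y, x => if y = x then 1 else 0
  | .lam y s, x => if y = x then 0 else fc s x
  | .app s S, x => fc s x + fcP S x
def fcP : List RT → ℕ → ℕ
  | [], _ => 0
  | t :: T, x => fc t x + fcP T x
end

mutual
def subst : RT → ℕ → RT → RT
  | .var y, x, t => if y = x then t else .var y
  | .lam y s, x, t => if y = x then .lam y s else .lam y (subst s x t)
  | .app s S, x, t => .app (subst s x t) (substP S x t)
def substP : List RT → ℕ → RT → List RT
  | [], _, _ => []
  | u :: T, x, t => subst u x t :: substP T x t
end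

def splits : List RT → List (List RT × List RT)
  | [] => [([], [])]
  | a :: l => (splits l).flatMap fun p => [(a :: p.1, p.2), (p.1, a :: p.2)]

mutual
def dsubst : RT → ℕ → List RT → Multiset RT
  | .var y, x, S =>
      if y = x then (match S with | [t] => {t} | _ => 0)
      else if S.isEmpty then {RT.var y} else 0
  | .lam y s, x, S =>
      if y = x then (if S.isEmpty then {RT.lam y s} else 0)
      else (dsubst s x S).map (RT.lam y)
  | .app s T, x, S =>
      ((splits S).map fun p =>
        (dsubst s x p.1).bind fun s' =>
          (dsubstP T x p.2).map fun T' => RT.app s' T').sum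
def dsubstP : List RT → ℕ → List RT → Multiset (List RT)
  | [], _, S => if S.isEmpty then {([] : List RT)} else 0
  | t :: T, x, S =>
      ((splits S).map fun p =>
        (dsubst t x p.1).bind fun t' =>
          (dsubstP T x p.2).map fun T' => t' :: T').sum
end

mutual
inductive Red1 : RT → Multiset RT → Prop
  | beta (x : ℕ) (s : RT) (S : List RT) : Red1 (.app (.lam x s) S) (dsubst s x S)
  | lam (x : ℕ) {s : RT} {a : Multiset RT} : Red1 s a → Red1 (.lam x s) (a.map (RT.lam x))
  | appL {s : RT} {a : Multiset RT} (S : List RT) :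
      Red1 s a → Red1 (.app s S) (a.map fun u => RT.app u S)
  | appR (s : RT) {S : List RT} {A : Multiset (List RT)} :
      Red1P S A → Red1 (.app s S) (A.map fun T => RT.app s T)
inductive Red1P : List RT → Multiset (List RT) → Prop
  | head {t : RT} {b : Multiset RT} (T : List RT) :
      Red1 t b → Red1P (t :: T) (b.map fun u => u :: T)
  | tail (t : RT) {T : List RT} {B : Multiset (List RT)} :
      Red1P T B → Red1P (t :: T) (B.map fun T' => t :: T')
end

def NLift {α β : Type*} (ρ : α → Multiset β → Prop) (a : Multiset α) (b : Multiset β) : Prop :=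
  ∃ l : List (α × Multiset β), (∀ p ∈ l, ρ p.1 p.2) ∧
    a = (l.map Prod.fst : List α) ∧ b = (l.map Prod.snd).sum

def Red1R (s : RT) (b : Multiset RT) : Prop := b = {s} ∨ Red1 s b

def Red : Multiset RT → Multiset RT → Prop := Relation.TransGen (NLift Red1R)

def rle (t s : RT) : Prop := ∃ a, Red {s} a ∧ t ∈ a

def above (s : RT) : Set RT := {t | rle s t}

def Red1RP (S : List RT) (B : Multiset (List RT)) : Prop := B = {S} ∨ Red1P S B

def RedP : Multiset (List RT) → Multiset (List RT) → Prop := Relation.TransGen (NLift Red1RP)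

def plep (T S : List RT) : Prop := ∃ A, RedP {S} A ∧ T ∈ A





def orth {I : Type*} (F : Set (Set I)) : Set (Set I) := {e' | ∀ e ∈ F, (e ∩ e').Finite}

structure FinSpace (I : Type*) where
  F : Set (Set I)
  biorth : orth (orth F) ⊆ F

lemma subset_biorth {I : Type*} (G : Set (Set I)) : G ⊆ orth (orth G) := by
  intro e he g hg
  have := hg e he
  rwa [Set.inter_comm] at this

lemma orth_anti {I : Type*} {G H : Set (Set I)} (h : G ⊆ H) : orth H ⊆ orth G :=
  fun g hg e he => hg e (h he)

def FinSpace.ofOrth {I : Type*} (G : Set (Set I)) : FinSpace I :=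
  ⟨orth G, orth_anti (subset_biorth G)⟩

lemma FinSpace.empty_mem {I : Type*} (X : FinSpace I) : ∅ ∈ X.F :=
  X.biorth (fun g _ => by simp)

lemma FinSpace.mem_of_subset {I : Type*} (X : FinSpace I) {e f : Set I}
    (he : e ∈ X.F) (h : f ⊆ e) : f ∈ X.F := by
  refine X.biorth (fun g hg => ?_)
  exact ((hg e he).subset (fun x hx => ⟨h hx.2, hx.1⟩))

lemma FinSpace.union_mem {I : Type*} (X : FinSpace I) {e f : Set I}
    (he : e ∈ X.F) (hf : f ∈ X.F) : e ∪ f ∈ X.F := by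
  refine X.biorth (fun g hg => ?_)
  have h1 := hg e he
  have h2 := hg f hf
  rw [Set.inter_comm] at h1 h2
  rw [Set.inter_union_distrib_left]
  exact h1.union h2

def fsSub (k : Type*) [Field k] {I : Type*} (X : FinSpace I) : Submodule k (I → k) where
  carrier := {a | {s | a s ≠ 0} ∈ X.F}
  add_mem' := by
    intro a b ha hb
    refine X.mem_of_subset (X.union_mem ha hb) ?_
    intro s hs
    by_contra h
    simp only [Set.mem_union, Set.mem_setOf_eq, not_or, not_not] at h
    exact hs (by simp [Pi.add_apply, h.1, h.2])
  zero_mem' := by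
    refine X.mem_of_subset X.empty_mem ?_
    intro s hs
    simp at hs
  smul_mem' := by
    intro c a ha
    refine X.mem_of_subset ha ?_
    intro s hs
    by_contra h
    simp only [Set.mem_setOf_eq, not_not] at h
    exact hs (by simp [Pi.smul_apply, h])

def fsTop (k : Type*) [Field k] {I : Type*} (X : FinSpace I) :
    TopologicalSpace (fsSub k X) where
  IsOpen U := ∀ a ∈ U, ∃ e' ∈ orth X.F, ∀ b : fsSub k X, (∀ s ∈ e', b.1 s = a.1 s) → b ∈ U
  isOpen_univ := by
    intro a _
    exact ⟨∅, fun e _ => by simp, fun b _ => trivial⟩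
  isOpen_inter := by
    rintro U V hU hV a ⟨haU, haV⟩
    obtain ⟨e₁, he₁, h₁⟩ := hU a haU
    obtain ⟨e₂, he₂, h₂⟩ := hV a haV
    refine ⟨e₁ ∪ e₂, fun e he => ?_, fun b hb => ?_⟩
    · rw [Set.inter_union_distrib_left]
      exact (he₁ e he).union (he₂ e he)
    · exact ⟨h₁ b (fun s hs => hb s (Or.inl hs)), h₂ b (fun s hs => hb s (Or.inr hs))⟩
  isOpen_sUnion := by
    rintro 𝒮 h a ⟨U, hU, haU⟩
    obtain ⟨e', he', hb⟩ := h U hU a haU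
    exact ⟨e', he', fun b hbs => ⟨U, hU, hb b hbs⟩⟩



def Sfin : Set (Set RT) := orth (Set.range above)

def SfinSpace : FinSpace RT := FinSpace.ofOrth (Set.range above)

def SS : Set (Set RT) := {e' | ∀ ξ : Finset ℕ, {s ∈ e' | fv s ⊆ ξ}.Finite}

def Sfv : Set (Set RT) := orth (Set.range above ∪ SS)

def bang (e : Set RT) : Set (List RT) := {S | ∀ t ∈ S, t ∈ e}

def appSet (g : Set RT) (E : Set (List RT)) : Set RT :=
  {u | ∃ t ∈ g, ∃ S ∈ E, u = RT.app t S}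

def lamSet (x : ℕ) (g : Set RT) : Set RT := {u | ∃ s ∈ g, u = RT.lam x s}

def appMany (g : Set RT) (Es : List (Set (List RT))) : Set RT := Es.foldl appSet g

def dsubstSet (g : Set RT) (x : ℕ) (E : Set (List RT)) : Set RT :=
  {t | ∃ s ∈ g, ∃ S ∈ E, t ∈ dsubst s x S}

def IsDFS (W : Set RT) (F : Set (Set RT)) : Prop :=
  (∀ e ∈ F, e ⊆ W) ∧ ∀ e : Set RT, e ⊆ W → e ∈ orth (orth F) → e ∈ F

def SaturatedP (W : Set RT) (F : Set (Set RT)) : Prop :=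
  (∀ (x : ℕ) (es : List (Set RT)), (∀ e ∈ es, e ∈ Sfv) →
      appMany {RT.var x} (es.map bang) ∈ F) ∧
  F ⊆ Sfv ∧
  (∀ (x : ℕ) (g e : Set RT) (es : List (Set RT)), g ∈ Sfv → e ∈ Sfv →
      (∀ e' ∈ es, e' ∈ Sfv) →
      appMany (dsubstSet g x (bang e)) (es.map bang) ∈ F →
      appMany (appSet (lamSet x g) (bang e)) (es.map bang) ∈ F)

abbrev FP := Set RT × Set (Set RT)

def SatFP (X : FP) : Prop := IsDFS X.1 X.2 ∧ SaturatedP X.1 X.2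

def implWeb (FX FY : Set (Set RT)) : Set RT :=
  {t | ∀ e ∈ FX, appSet {t} (bang e) ∈ FY}

def implF (FX FY : Set (Set RT)) : Set (Set RT) :=
  {g | g ⊆ implWeb FX FY ∧ ∀ e ∈ FX, appSet g (bang e) ∈ FY}

def implFP (X Y : FP) : FP := (implWeb X.2 Y.2, implF X.2 Y.2)

def preimpl (e : Set RT) (f' : Set RT) : Set RT :=
  {t | (appSet {t} (bang e) ∩ f').Nonempty}

def pdsubstSet (f : Set RT) (l : List (ℕ × Set (List RT))) : Set RT :=
  l.foldl (fun g p => dsubstSet g p.1 p.2) f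

inductive ALam (k : Type) : Type
  | var : ℕ → ALam k
  | lam : ℕ → ALam k → ALam k
  | app : ALam k → List (k × ALam k) → ALam k

variable {k : Type} [Field k]

mutual
def taylor : ALam k → RT → k
  | .var x, .var y => if x = y then 1 else 0
  | .var _, _ => 0
  | .lam x M, .lam y s => if x = y then taylor M s else 0
  | .lam _ _, _ => 0
  | .app M Q, .app t T =>
      taylor M t * ((Nat.factorial T.length : ℕ) : k)⁻¹ * (T.map fun u => taylorQ Q u).prod
  | .app _ _, _ => 0
def taylorQ : List (k × ALam k) → RT → k
  | [], _ => 0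
  | (α, N) :: Q, u => α * taylor N u + taylorQ Q u
end

mutual
inductive InShape : ALam k → RT → Prop
  | var (x : ℕ) : InShape (.var x) (.var x)
  | lam (x : ℕ) {M : ALam k} {s : RT} : InShape M s → InShape (.lam x M) (.lam x s)
  | app {M : ALam k} {Q : List (k × ALam k)} {s : RT} {T : List RT} :
      InShape M s → (∀ u ∈ T, InShapeQ Q u) →
      InShape (.app M Q) (.app s T)
inductive InShapeQ : List (k × ALam k) → RT → Prop
  | head {α : k} {N : ALam k} (Q : List (k × ALam k)) {u : RT} :
      InShape N u → InShapeQ ((α, N) :: Q) u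
  | tail (p : k × ALam k) {Q : List (k × ALam k)} {u : RT} :
      InShapeQ Q u → InShapeQ (p :: Q) u
end

inductive Ty : Type
  | var : ℕ → Ty
  | arrow : Ty → Ty → Ty
  | all : ℕ → Ty → Ty

def tyFV : Ty → Finset ℕ
  | .var φ => {φ}
  | .arrow A B => tyFV A ∪ tyFV B
  | .all φ A => (tyFV A).erase φ

def substTy : Ty → ℕ → Ty → Ty
  | .var ψ, φ, B => if ψ = φ then B else .var ψ
  | .arrow A C, φ, B => .arrow (substTy A φ B) (substTy C φ B)
  | .all ψ A, φ, B => if ψ = φ then .all ψ A else .all ψ (substTy A φ B)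

inductive HasTy : List (ℕ × Ty) → ALam k → Ty → Prop
  | var (Γ : List (ℕ × Ty)) (x : ℕ) (A : Ty) :
      List.lookup x Γ = some A → HasTy Γ (.var x) A
  | abs {Γ : List (ℕ × Ty)} {x : ℕ} {M : ALam k} {A B : Ty} :
      HasTy ((x, A) :: Γ) M B → HasTy Γ (.lam x M) (.arrow A B)
  | app {Γ : List (ℕ × Ty)} {M : ALam k} {Q : List (k × ALam k)} {A B : Ty} :
      HasTy Γ M (.arrow A B) → (∀ p ∈ Q, HasTy Γ p.2 A) → HasTy Γ (.app M Q) B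
  | inst {Γ : List (ℕ × Ty)} {M : ALam k} {φ : ℕ} {A : Ty} (B : Ty) :
      HasTy Γ M (.all φ A) → HasTy Γ M (substTy A φ B)
  | gen {Γ : List (ℕ × Ty)} {M : ALam k} {φ : ℕ} {A : Ty} :
      HasTy Γ M A → (∀ p ∈ Γ, φ ∉ tyFV p.2) → HasTy Γ M (.all φ A)



def interp (I : ℕ → FP) : Ty → FP
  | .var φ => I φ
  | .arrow A B => implFP (interp I A) (interp I B)
  | .all φ A =>
      (⋂ (X : FP) (_ : SatFP X), (interp (Function.update I φ X) A).1,
       {e | (e ⊆ ⋂ (X : FP) (_ : SatFP X), (interp (Function.update I φ X) A).1) ∧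
            ∀ X : FP, SatFP X → e ∈ (interp (Function.update I φ X) A).2})

section iInter

variable {ι : Type*} {W : ι → Set RT} {F : ι → Set (Set RT)}

def iInterFin (W : ι → Set RT) (F : ι → Set (Set RT)) : Set (Set RT) :=
  {e | e ⊆ ⋂ i, W i ∧ ∀ i, e ∈ F i}

lemma iInterFin_subset (i : ι) : iInterFin W F ⊆ F i := fun _ he => he.2 i

lemma mem_iInterFin (hW : ∀ i, ∀ e ∈ F i, e ⊆ W i) {e : Set RT} (he : ∀ i, e ∈ F i) :
    e ∈ iInterFin W F :=
  ⟨Set.subset_iInter fun i => hW i e (he i), he⟩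

lemma IsDFS.iInter (h : ∀ i, IsDFS (W i) (F i)) : IsDFS (⋂ i, W i) (iInterFin W F) := by
  refine ⟨fun e he => he.1, fun e hW hbiorth => ⟨hW, fun i => ?_⟩⟩
  have hbiorth_i : e ∈ orth (orth (F i)) := orth_anti (orth_anti (iInterFin_subset i)) hbiorth
  exact (h i).2 e (hW.trans (Set.iInter_subset W i)) hbiorth_i

lemma SaturatedP.iInter [Nonempty ι] (hdfs : ∀ i, IsDFS (W i) (F i))
    (hsat : ∀ i, SaturatedP (W i) (F i)) : SaturatedP (⋂ i, W i) (iInterFin W F) := by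
  have hW : ∀ i, ∀ e ∈ F i, e ⊆ W i := fun i => (hdfs i).1
  refine ⟨fun x es hes => mem_iInterFin hW fun i => (hsat i).1 x es hes, ?_,
    fun x g e es hg he hes hmem =>
      mem_iInterFin hW fun i => (hsat i).2.2 x g e es hg he hes (hmem.2 i)⟩
  obtain ⟨i⟩ := ‹Nonempty ι›
  exact (iInterFin_subset i).trans (hsat i).2.1

lemma subset_iInter_and_subset_iInterFin {W' : Set RT} {F' : Set (Set RT)}
    (hW' : ∀ e ∈ F', e ⊆ W') (hle : ∀ i, W' ⊆ W i ∧ F' ⊆ F i) :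
    W' ⊆ ⋂ i, W i ∧ F' ⊆ iInterFin W F :=
  have hW'_sub : W' ⊆ ⋂ i, W i := Set.subset_iInter fun i => (hle i).1
  ⟨hW'_sub, fun e he => ⟨(hW' e he).trans hW'_sub, fun i => (hle i).2 he⟩⟩

end iInter

theorem statement15 {ι : Type*} [Nonempty ι] (W : ι → Set RT) (F : ι → Set (Set RT))
    (hsat : ∀ i, IsDFS (W i) (F i) ∧ SaturatedP (W i) (F i)) :
    IsDFS (⋂ i, W i) {e | e ⊆ ⋂ i, W i ∧ ∀ i, e ∈ F i} ∧
    SaturatedP (⋂ i, W i) {e | e ⊆ ⋂ i, W i ∧ ∀ i, e ∈ F i} ∧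
    (∀ i, (⋂ j, W j) ⊆ W i ∧ {e | e ⊆ ⋂ j, W j ∧ ∀ j, e ∈ F j} ⊆ F i) ∧
    (∀ (W' : Set RT) (F' : Set (Set RT)), IsDFS W' F' → SaturatedP W' F' →
      (∀ i, W' ⊆ W i ∧ F' ⊆ F i) →
      W' ⊆ ⋂ i, W i ∧ F' ⊆ {e | e ⊆ ⋂ i, W i ∧ ∀ i, e ∈ F i}) :=
  ⟨IsDFS.iInter fun i => (hsat i).1,
    SaturatedP.iInter (fun i => (hsat i).1) fun i => (hsat i).2,
    fun i => ⟨Set.iInter_subset W i, iInterFin_subset i⟩,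
    fun _ _ hdfs _ hle => subset_iInter_and_subset_iInterFin hdfs.1 hle⟩

end Resource
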